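/- Grothendieck's inequality in norm form: there is a finite constant K_G (Grothendieck's constant over F) such that for all l,m,n ∈ ℕ and all nonzero X ∈ F^{l×m}, M ∈ F^{m×n}, Y ∈ F^{n×l}: |tr(XMY)| ≤ K_G · ‖X‖_{1,2}‖Y‖_{2,∞}‖M‖_{∞,1}. -/

import Mathlib

open scoped ENNReal BigOperators
open Matrix

/-- The vector ℓ^p norm on `Fin n → 𝕜` for `p ∈ [1,∞]`. -/
noncomputable def lpNorm (p : ℝ≥0∞) {n : ℕ} {𝕜 : Type*} [RCLike 𝕜] (x : Fin n → 𝕜) : ℝ :=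
  if p = ∞ then ⨆ i, ‖x i‖ else (∑ i, ‖x i‖ ^ p.toReal) ^ (1 / p.toReal)

/-- The matrix (p,q)-operator norm: `max_{z ≠ 0} ‖Az‖_q / ‖z‖_p`. -/
noncomputable def opNorm (p q : ℝ≥0∞) {m n : ℕ} {𝕜 : Type*} [RCLike 𝕜]
    (A : Matrix (Fin m) (Fin n) 𝕜) : ℝ :=
  ⨆ z : {z : Fin n → 𝕜 // z ≠ 0}, lpNorm q (A.mulVec z.1) / lpNorm p z.1

/-!
Over `ℝ` the inequality holds with constant 96, by self-improvement. Replace the columns `x_j`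
of `X` and the rows `y_k` of `Y` (unit vectors of `ℝ^ι`) by their Rademacher sums
`X_j(ω) = ∑_t ε_t(ω) x_j(t)` on the cube `{±1}^ι`: these preserve inner products on average and
have fourth moment at most `3` (Khintchine). Truncating them at level `√48` splits
`∑ A_jk ⟨x_j, y_k⟩` into a part where both factors are bounded by `√48` pointwise, which the sign
form of `A` bounds by `48`, and two parts in which one factor has `L²` norm at most `1/4`, each
bounded by `c/4` if `c` is a valid constant. So `c` can be replaced by `48 + c/2`, and iterating
from the trivial bound `|m| |n|` gives `96`.

Over `ℂ`, rotate `M` so that the trace becomes real; its real part is a difference of two real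
Grothendieck sums for vectors in `ℝ^(ι ⊕ ι)`, which gives `192`. Finally `‖X‖_{1,2}` and
`‖Y‖_{2,∞}` bound the lengths of the columns of `X` and the rows of `Y`, and `‖M‖_{∞,1}` bounds
the bilinear form of `M` on the unit polydisc.
-/

def InfOneNormLE {𝕜 m n : Type*} [RCLike 𝕜] [Fintype m] [Fintype n] (A : Matrix m n 𝕜)
    (C : ℝ) : Prop :=
  ∀ u v, (∀ i, ‖u i‖ ≤ 1) → (∀ j, ‖v j‖ ≤ 1) → ‖u ⬝ᵥ A *ᵥ v‖ ≤ C

noncomputable def trunc (s z : ℝ) : ℝ := if |z| ≤ s then z else 0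

theorem abs_trunc_le {s : ℝ} (hs : 0 ≤ s) (z : ℝ) : |trunc s z| ≤ s := by
  unfold trunc
  split_ifs with h
  · exact h
  · simpa using hs

theorem sq_trunc_le (s z : ℝ) : trunc s z ^ 2 ≤ z ^ 2 := by
  unfold trunc
  split_ifs
  · rfl
  · simpa using sq_nonneg z

theorem sq_sub_trunc_mul_sq_le {s : ℝ} (hs : 0 ≤ s) (z : ℝ) :
    (z - trunc s z) ^ 2 * s ^ 2 ≤ z ^ 4 := by
  unfold trunc
  split_ifs with h
  · have : (0 : ℝ) ≤ z ^ 4 := by positivity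
    simpa using this
  · have : s ^ 2 ≤ z ^ 2 := by simpa [sq_abs] using pow_le_pow_left₀ hs (not_le.1 h).le 2
    rw [sub_zero]
    nlinarith [sq_nonneg z]

section Rademacher

variable {ι : Type*} [Fintype ι] [DecidableEq ι]

def boolSign (b : Bool) : ℝ := if b then 1 else -1

theorem boolSign_sq (b : Bool) : boolSign b ^ 2 = 1 := by cases b <;> norm_num [boolSign]

theorem boolSign_not (b : Bool) : boolSign (!b) = -boolSign b := by cases b <;> simp [boolSign]

theorem sum_mul_boolSign_eq_zero (T : ι) {f : (ι → Bool) → ℝ}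
    (hf : ∀ ω b, f (Function.update ω T b) = f ω) : ∑ ω, f ω * boolSign (ω T) = 0 :=
  Finset.sum_ninvolution (fun ω => Function.update ω T (!ω T))
    (fun ω => by simp [hf, boolSign_not])
    (fun ω _ h => by simpa using congrFun h T)
    (fun _ => Finset.mem_univ _) (fun ω => by simp)

def radSum (s : Finset ι) (u : ι → ℝ) (ω : ι → Bool) : ℝ := ∑ t ∈ s, boolSign (ω t) * u t

omit [Fintype ι] in
theorem radSum_insert {s : Finset ι} {T : ι} (hT : T ∉ s) (u : ι → ℝ) (ω : ι → Bool) :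
    radSum (insert T s) u ω = boolSign (ω T) * u T + radSum s u ω :=
  Finset.sum_insert hT

omit [Fintype ι] in
theorem radSum_update {s : Finset ι} {T : ι} (hT : T ∉ s) (u : ι → ℝ) (ω : ι → Bool)
    (b : Bool) : radSum s u (Function.update ω T b) = radSum s u ω :=
  Finset.sum_congr rfl fun t ht => by rw [Function.update_of_ne (ne_of_mem_of_not_mem ht hT)]

theorem sum_radSum_mul_radSum (s : Finset ι) (u v : ι → ℝ) :
    ∑ ω, radSum s u ω * radSum s v ω = Fintype.card (ι → Bool) * ∑ t ∈ s, u t * v t := by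
  induction s using Finset.induction with
  | empty => simp [radSum]
  | insert T s hT ih =>
    have hexp : ∀ ω, radSum (insert T s) u ω * radSum (insert T s) v ω =
        radSum s u ω * radSum s v ω + u T * v T +
          (u T * radSum s v ω + v T * radSum s u ω) * boolSign (ω T) := fun ω => by
      rw [radSum_insert hT, radSum_insert hT]
      linear_combination (u T * v T) * boolSign_sq (ω T)
    have hodd : ∑ ω, (u T * radSum s v ω + v T * radSum s u ω) * boolSign (ω T) = 0 :=
      sum_mul_boolSign_eq_zero T fun _ _ => by simp only [radSum_update hT]
    simp only [hexp, Finset.sum_add_distrib, hodd, ih, Finset.sum_insert hT, Finset.sum_const,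
      Finset.card_univ, nsmul_eq_mul]
    ring

theorem sum_radSum_pow_four_le (s : Finset ι) (u : ι → ℝ) :
    ∑ ω, radSum s u ω ^ 4 ≤ 3 * Fintype.card (ι → Bool) * (∑ t ∈ s, u t ^ 2) ^ 2 := by
  induction s using Finset.induction with
  | empty => simp [radSum]
  | insert T s hT ih =>
    have hexp : ∀ ω, radSum (insert T s) u ω ^ 4 =
        radSum s u ω ^ 4 + 6 * u T ^ 2 * radSum s u ω ^ 2 + u T ^ 4 +
          (4 * u T * radSum s u ω ^ 3 + 4 * u T ^ 3 * radSum s u ω) * boolSign (ω T) :=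
      fun ω => by
        rw [radSum_insert hT]
        linear_combination (6 * radSum s u ω ^ 2 * u T ^ 2 +
          4 * radSum s u ω * u T ^ 3 * boolSign (ω T) + u T ^ 4 * (boolSign (ω T) ^ 2 + 1)) *
            boolSign_sq (ω T)
    have hodd : ∑ ω, (4 * u T * radSum s u ω ^ 3 + 4 * u T ^ 3 * radSum s u ω) *
        boolSign (ω T) = 0 :=
      sum_mul_boolSign_eq_zero T fun _ _ => by simp only [radSum_update hT]
    have hsq : ∑ ω, radSum s u ω ^ 2 = Fintype.card (ι → Bool) * ∑ t ∈ s, u t ^ 2 := by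
      simpa only [sq] using sum_radSum_mul_radSum s u u
    simp only [hexp, Finset.sum_add_distrib, hodd, ← Finset.mul_sum, hsq, Finset.sum_insert hT,
      Finset.sum_const, Finset.card_univ, nsmul_eq_mul]
    have hT4 : 0 ≤ (Fintype.card (ι → Bool) : ℝ) * u T ^ 4 := by positivity
    linear_combination ih + 2 * hT4

/-- Row `ω` lists the signs `ε_t(ω)`, so column `j` of `signMatrix ι * X` is the Rademacher sum
`radSum Finset.univ (X · j)`. -/
def signMatrix (ι : Type*) : Matrix (ι → Bool) ι ℝ := Matrix.of fun ω t => boolSign (ω t)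

theorem transpose_mul_signMatrix_mul {m n : Type*} (X : Matrix ι m ℝ) (Y : Matrix n ι ℝ) :
    (signMatrix ι * Yᵀ)ᵀ * (signMatrix ι * X) = (Fintype.card (ι → Bool) : ℝ) • (Y * X) := by
  ext k j
  exact sum_radSum_mul_radSum Finset.univ (Y k) fun t => X t j

theorem trace_signMatrix_mul_mul_transpose {m n : Type*} [Fintype m] [Fintype n]
    (X : Matrix ι m ℝ) (A : Matrix m n ℝ) (Y : Matrix n ι ℝ) :
    trace (signMatrix ι * X * A * (signMatrix ι * Yᵀ)ᵀ) =
      Fintype.card (ι → Bool) * trace (X * A * Y) := by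
  rw [trace_mul_comm, ← Matrix.mul_assoc, transpose_mul_signMatrix_mul, Matrix.smul_mul,
    trace_smul, smul_eq_mul, trace_mul_cycle X A Y]

variable {u : ι → ℝ} (hu : ∑ t, u t ^ 2 ≤ 1)
include hu

theorem sum_sq_radSum_le : ∑ ω, radSum Finset.univ u ω ^ 2 ≤ Fintype.card (ι → Bool) :=
  calc ∑ ω, radSum Finset.univ u ω ^ 2 = Fintype.card (ι → Bool) * ∑ t, u t ^ 2 := by
        simpa only [sq] using sum_radSum_mul_radSum Finset.univ u u
    _ ≤ Fintype.card (ι → Bool) := mul_le_of_le_one_right (Nat.cast_nonneg _) hu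

theorem sum_sq_trunc_radSum_le (s : ℝ) :
    ∑ ω, trunc s (radSum Finset.univ u ω) ^ 2 ≤ Fintype.card (ι → Bool) :=
  (Finset.sum_le_sum fun _ _ => sq_trunc_le s _).trans (sum_sq_radSum_le hu)

theorem sum_sq_sub_trunc_radSum_le {s : ℝ} (hs : 0 < s) :
    ∑ ω, (radSum Finset.univ u ω - trunc s (radSum Finset.univ u ω)) ^ 2 ≤
      3 * Fintype.card (ι → Bool) / s ^ 2 := by
  rw [le_div_iff₀ (by positivity), Finset.sum_mul]
  calc _ ≤ ∑ ω, radSum Finset.univ u ω ^ 4 :=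
        Finset.sum_le_sum fun _ _ => sq_sub_trunc_mul_sq_le hs.le _
    _ ≤ 3 * Fintype.card (ι → Bool) * (∑ t, u t ^ 2) ^ 2 := sum_radSum_pow_four_le _ _
    _ ≤ 3 * Fintype.card (ι → Bool) :=
        mul_le_of_le_one_right (by positivity)
          (pow_le_one₀ (Finset.sum_nonneg fun t _ => sq_nonneg _) hu)

end Rademacher

theorem norm_ofReal_inv_mul_le_one {𝕜 : Type*} [RCLike 𝕜] {a : ℝ} (ha : 0 < a) {z : 𝕜}
    (hz : ‖z‖ ≤ a) : ‖(a : 𝕜)⁻¹ * z‖ ≤ 1 := by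
  rw [norm_mul, norm_inv, RCLike.norm_of_nonneg ha.le]
  exact inv_mul_le_one_of_le₀ hz ha.le

namespace InfOneNormLE

open RCLike

variable {𝕜 m n : Type*} [RCLike 𝕜] [Fintype m] [Fintype n] {A : Matrix m n 𝕜} {C : ℝ}

theorem mono (h : InfOneNormLE A C) {C' : ℝ} (hC : C ≤ C') : InfOneNormLE A C' :=
  fun u v hu hv => (h u v hu hv).trans hC

theorem smul (h : InfOneNormLE A C) (a : 𝕜) : InfOneNormLE (a • A) (‖a‖ * C) :=
  fun u v hu hv => by
    rw [smul_mulVec, dotProduct_smul, norm_smul]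
    exact mul_le_mul_of_nonneg_left (h u v hu hv) (norm_nonneg a)

theorem norm_le_mul (h : InfOneNormLE A C) {α β : ℝ} (hα : 0 < α) (hβ : 0 < β)
    {u : m → 𝕜} {v : n → 𝕜} (hu : ∀ i, ‖u i‖ ≤ α) (hv : ∀ j, ‖v j‖ ≤ β) :
    ‖u ⬝ᵥ A *ᵥ v‖ ≤ α * β * C := by
  have := h ((α : 𝕜)⁻¹ • u) ((β : 𝕜)⁻¹ • v) (fun i => norm_ofReal_inv_mul_le_one hα (hu i))
    (fun j => norm_ofReal_inv_mul_le_one hβ (hv j))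
  rw [mulVec_smul, smul_dotProduct, dotProduct_smul, norm_smul, norm_smul, norm_inv, norm_inv,
    norm_of_nonneg hα.le, norm_of_nonneg hβ.le] at this
  rw [← inv_mul_le_iff₀ (mul_pos hα hβ), mul_inv]
  linarith

theorem norm_apply_le [DecidableEq m] [DecidableEq n] (h : InfOneNormLE A C) (i : m) (j : n) :
    ‖A i j‖ ≤ C := by
  have := h (Pi.single i 1) (Pi.single j 1) (fun i' => by by_cases h : i' = i <;> simp [h])
    (fun j' => by by_cases h : j' = j <;> simp [h])
  simpa using this

theorem map_re (h : InfOneNormLE A C) : InfOneNormLE (A.map re) C := fun u v hu hv =>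
  calc ‖u ⬝ᵥ A.map re *ᵥ v‖ = |re ((fun i => (u i : 𝕜)) ⬝ᵥ A *ᵥ fun j => (v j : 𝕜))| := by
        simp [dotProduct, mulVec, Finset.mul_sum, mul_comm, mul_left_comm]
    _ ≤ C := (abs_re_le_norm _).trans (h _ _ (by simpa using hu) (by simpa using hv))

theorem map_im (h : InfOneNormLE A C) : InfOneNormLE (A.map im) C := fun u v hu hv =>
  calc ‖u ⬝ᵥ A.map im *ᵥ v‖ = |im ((fun i => (u i : 𝕜)) ⬝ᵥ A *ᵥ fun j => (v j : 𝕜))| := by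
        simp [dotProduct, mulVec, Finset.mul_sum, mul_comm, mul_left_comm]
    _ ≤ C := (abs_im_le_norm _).trans (h _ _ (by simpa using hu) (by simpa using hv))

theorem norm_trace_mul_mul_transpose_le (hA : InfOneNormLE A C) {Ω : Type*} [Fintype Ω]
    {P : Matrix Ω m 𝕜} {Q : Matrix Ω n 𝕜} {α β : ℝ} (hα : 0 < α) (hβ : 0 < β)
    (hP : ∀ ω j, ‖P ω j‖ ≤ α) (hQ : ∀ ω k, ‖Q ω k‖ ≤ β) :
    ‖trace (P * A * Qᵀ)‖ ≤ Fintype.card Ω * (α * β * C) := by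
  have htr : trace (P * A * Qᵀ) = ∑ ω, P ω ⬝ᵥ A *ᵥ Q ω := by
    simp only [trace, diag_apply, Matrix.mul_apply, transpose_apply, Finset.sum_mul, mul_assoc,
      dotProduct, mulVec, Finset.mul_sum]
    exact Finset.sum_congr rfl fun _ _ => Finset.sum_comm
  calc ‖trace (P * A * Qᵀ)‖ ≤ ∑ ω, ‖P ω ⬝ᵥ A *ᵥ Q ω‖ := htr ▸ norm_sum_le _ _
    _ ≤ ∑ _ω : Ω, α * β * C := Finset.sum_le_sum fun ω _ => hA.norm_le_mul hα hβ (hP ω) (hQ ω)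
    _ = Fintype.card Ω * (α * β * C) := by simp

end InfOneNormLE

theorem abs_trace_mul_mul_transpose_le_add {Ω m n : Type*} [Fintype Ω] [Fintype m] [Fintype n]
    (R T : Matrix Ω m ℝ) (A : Matrix m n ℝ) (Q S : Matrix Ω n ℝ) :
    |trace (R * A * Qᵀ)| ≤
      |trace (T * A * Sᵀ)| + |trace ((R - T) * A * Qᵀ)| + |trace (T * A * (Q - S)ᵀ)| := by
  have hsplit : R * A * Qᵀ = T * A * Sᵀ + (R - T) * A * Qᵀ + T * A * (Q - S)ᵀ := by
    simp only [Matrix.sub_mul, Matrix.mul_sub, transpose_sub]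
    abel
  rw [hsplit, trace_add, trace_add]
  exact abs_add_three _ _ _

/-- `trace (X * A * Y) = ∑ A_jk ⟨x_j, y_k⟩` for the columns `x_j` of `X` and the rows `y_k`
of `Y`. -/
def IsGrothendieckConstant (m n : Type*) [Fintype m] [Fintype n] (c : ℝ) : Prop :=
  ∀ (ι : Type) [Fintype ι] (X : Matrix ι m ℝ) (A : Matrix m n ℝ) (Y : Matrix n ι ℝ),
    (∀ j, ∑ t, X t j ^ 2 ≤ 1) → (∀ k, ∑ t, Y k t ^ 2 ≤ 1) → InfOneNormLE A 1 →
      |trace (X * A * Y)| ≤ c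

namespace IsGrothendieckConstant

variable {m n : Type*} [Fintype m] [Fintype n] {c : ℝ}

theorem mono (h : IsGrothendieckConstant m n c) {c' : ℝ} (hc : c ≤ c') :
    IsGrothendieckConstant m n c' :=
  fun ι _ X A Y hX hY hA => (h ι X A Y hX hY hA).trans hc

theorem card_mul_card : IsGrothendieckConstant m n (Fintype.card m * Fintype.card n) := by
  intro ι _ X A Y hX hY hA
  classical
  have hYX : ∀ k j, |(Y * X) k j| ≤ 1 := fun k j => by
    rw [← sq_le_one_iff_abs_le_one]
    calc (∑ t, Y k t * X t j) ^ 2 ≤ (∑ t, Y k t ^ 2) * ∑ t, X t j ^ 2 :=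
          Finset.sum_mul_sq_le_sq_mul_sq _ _ _
      _ ≤ 1 := mul_le_one₀ (hY k) (Finset.sum_nonneg fun t _ => sq_nonneg _) (hX j)
  calc |trace (X * A * Y)| = |∑ j, ∑ k, A j k * (Y * X) k j| := by
        rw [trace_mul_cycle, trace_mul_comm]; rfl
    _ ≤ ∑ j, ∑ k, |A j k * (Y * X) k j| :=
        (Finset.abs_sum_le_sum_abs _ _).trans
          (Finset.sum_le_sum fun j _ => Finset.abs_sum_le_sum_abs _ _)
    _ ≤ ∑ _j : m, ∑ _k : n, (1 : ℝ) := by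
        gcongr with j _ k
        rw [abs_mul]
        exact mul_le_one₀ (by simpa using hA.norm_apply_le j k) (abs_nonneg _) (hYX k j)
    _ = Fintype.card m * Fintype.card n := by simp

theorem abs_trace_le (h : IsGrothendieckConstant m n c) {ι : Type} [Fintype ι]
    {X : Matrix ι m ℝ} {A : Matrix m n ℝ} {Y : Matrix n ι ℝ} {α β γ : ℝ} (hα : 0 < α)
    (hβ : 0 < β) (hγ : 0 < γ) (hX : ∀ j, ∑ t, X t j ^ 2 ≤ α ^ 2)
    (hY : ∀ k, ∑ t, Y k t ^ 2 ≤ β ^ 2) (hA : InfOneNormLE A γ) :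
    |trace (X * A * Y)| ≤ c * α * β * γ := by
  have hnormalize : ∀ {a : ℝ}, 0 < a → ∀ x : ι → ℝ, ∑ t, x t ^ 2 ≤ a ^ 2 →
      ∑ t, (a⁻¹ * x t) ^ 2 ≤ 1 := fun ha x hx => by
    simp_rw [mul_pow, ← Finset.mul_sum, inv_pow]
    exact inv_mul_le_one_of_le₀ hx (by positivity)
  have := h ι (α⁻¹ • X) (γ⁻¹ • A) (β⁻¹ • Y) (fun j => hnormalize hα _ (hX j))
    (fun k => hnormalize hβ _ (hY k))
    (by simpa [abs_of_pos hγ, hγ.ne'] using hA.smul γ⁻¹)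
  simp only [Matrix.smul_mul, Matrix.mul_smul, trace_smul, smul_eq_mul, abs_mul, abs_inv,
    abs_of_pos hα, abs_of_pos hβ, abs_of_pos hγ] at this
  calc |trace (X * A * Y)| = α * β * γ * (β⁻¹ * (γ⁻¹ * (α⁻¹ * |trace (X * A * Y)|))) := by
        field_simp
    _ ≤ α * β * γ * c := mul_le_mul_of_nonneg_left this (by positivity)
    _ = c * α * β * γ := by ring

theorem forty_eight_add_half (h : IsGrothendieckConstant m n c) :
    IsGrothendieckConstant m n (48 + c / 2) := by
  intro ι _ X A Y hX hY hA
  classical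
  set D : ℝ := (Fintype.card (ι → Bool) : ℝ)
  have hD : 0 < D := Nat.cast_pos.2 Fintype.card_pos
  have hsD : √D ^ 2 = D := Real.sq_sqrt hD.le
  have hsD4 : 3 * D / √48 ^ 2 = (√D / 4) ^ 2 := by
    rw [div_pow, hsD, Real.sq_sqrt (by norm_num)]
    ring
  set R := signMatrix ι * X
  set Q := signMatrix ι * Yᵀ
  set TR := R.map (trunc √48)
  set TQ := Q.map (trunc √48)
  have h₁ : |trace (TR * A * TQᵀ)| ≤ D * (√48 * √48 * 1) := by
    simpa only [Real.norm_eq_abs] using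
      hA.norm_trace_mul_mul_transpose_le (P := TR) (Q := TQ) (by positivity) (by positivity)
        (fun ω j => abs_trunc_le (by positivity) (R ω j))
        (fun ω k => abs_trunc_le (by positivity) (Q ω k))
  have h₂ : |trace ((R - TR) * A * Qᵀ)| ≤ c * (√D / 4) * √D * 1 :=
    h.abs_trace_le (by positivity) (by positivity) one_pos
      (fun j => hsD4 ▸ sum_sq_sub_trunc_radSum_le (hX j) (by positivity))
      (fun k => hsD.symm ▸ sum_sq_radSum_le (hY k)) hA
  have h₃ : |trace (TR * A * (Q - TQ)ᵀ)| ≤ c * √D * (√D / 4) * 1 :=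
    h.abs_trace_le (by positivity) (by positivity) one_pos
      (fun j => hsD.symm ▸ sum_sq_trunc_radSum_le (hX j) _)
      (fun k => hsD4 ▸ sum_sq_sub_trunc_radSum_le (hY k) (by positivity)) hA
  have hmain : D * |trace (X * A * Y)| ≤ D * (48 + c / 2) :=
    calc D * |trace (X * A * Y)| = |trace (R * A * Qᵀ)| := by
          rw [trace_signMatrix_mul_mul_transpose, abs_mul, abs_of_pos hD]
      _ ≤ |trace (TR * A * TQᵀ)| + |trace ((R - TR) * A * Qᵀ)| +
            |trace (TR * A * (Q - TQ)ᵀ)| := abs_trace_mul_mul_transpose_le_add R TR A Q TQ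
      _ ≤ D * (√48 * √48 * 1) + c * (√D / 4) * √D * 1 + c * √D * (√D / 4) * 1 := by
          gcongr
      _ = D * (48 + c / 2) := by
          rw [Real.mul_self_sqrt (by norm_num)]
          linear_combination (c / 2) * hsD
  exact le_of_mul_le_mul_left hmain hD

end IsGrothendieckConstant

theorem isGrothendieckConstant_ninetySix (m n : Type*) [Fintype m] [Fintype n] :
    IsGrothendieckConstant m n 96 := by
  have hiter : ∀ k : ℕ,
      IsGrothendieckConstant m n (96 + Fintype.card m * Fintype.card n / 2 ^ k) := by
    intro k
    induction k with
    | zero => exact IsGrothendieckConstant.card_mul_card.mono (by simp)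
    | succ k ih =>
      convert ih.forty_eight_add_half using 1
      rw [pow_succ]
      ring
  intro ι _ X A Y hX hY hA
  have hlim : Filter.Tendsto (fun k : ℕ => 96 + Fintype.card m * Fintype.card n / (2 : ℝ) ^ k)
      Filter.atTop (nhds 96) := by
    simpa using tendsto_const_nhds.add
      ((tendsto_pow_atTop_atTop_of_one_lt one_lt_two).const_div_atTop
        (Fintype.card m * Fintype.card n : ℝ))
  exact ge_of_tendsto' hlim fun k => hiter k ι X A Y hX hY hA

section Realification

open RCLike

variable {𝕜 : Type*} [RCLike 𝕜] {ι : Type} [Fintype ι] {m n : Type*} [Fintype m] [Fintype n]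

theorem re_trace_mul (A : Matrix m n 𝕜) (B : Matrix n m 𝕜) :
    re (trace (A * B)) = trace (A.map re * B.map re) - trace (A.map im * B.map im) := by
  simp [Matrix.trace, Matrix.mul_apply, mul_re, Finset.sum_sub_distrib]

omit [Fintype m] [Fintype n] in
theorem map_re_mul (Y : Matrix n ι 𝕜) (X : Matrix ι m 𝕜) :
    (Y * X).map re = fromCols (Y.map re) (-Y.map im) * fromRows (X.map re) (X.map im) := by
  ext k j
  simp [Matrix.mul_apply, mul_re, Finset.sum_add_distrib, sub_eq_add_neg]

omit [Fintype m] [Fintype n] in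
theorem map_im_mul (Y : Matrix n ι 𝕜) (X : Matrix ι m 𝕜) :
    (Y * X).map im = fromCols (Y.map im) (Y.map re) * fromRows (X.map re) (X.map im) := by
  ext k j
  simp [Matrix.mul_apply, mul_im, Finset.sum_add_distrib, add_comm]

theorem sq_re_add_sq_im (z : 𝕜) : re z ^ 2 + im z ^ 2 = ‖z‖ ^ 2 := by
  rw [norm_sq_eq_def]
  ring

theorem exists_norm_le_one_re_mul_eq_norm (z : 𝕜) : ∃ w : 𝕜, ‖w‖ ≤ 1 ∧ re (w * z) = ‖z‖ := by
  rcases eq_or_ne z 0 with rfl | hz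
  · exact ⟨0, by simp⟩
  refine ⟨starRingEnd 𝕜 z / ‖z‖, ?_, ?_⟩
  · rw [norm_div, norm_conj, norm_ofReal, abs_norm, div_self (norm_ne_zero_iff.2 hz)]
  · rw [div_mul_eq_mul_div, RCLike.conj_mul, ← ofReal_pow, ← ofReal_div, ofReal_re, sq,
      mul_div_cancel_right₀ _ (norm_ne_zero_iff.2 hz)]

namespace IsGrothendieckConstant

variable {c : ℝ} (hc : IsGrothendieckConstant m n c) {X : Matrix ι m 𝕜} {M : Matrix m n 𝕜}
  {Y : Matrix n ι 𝕜} {a b C : ℝ} (ha : 0 < a) (hb : 0 < b) (hC : 0 < C)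
  (hX : ∀ j, ∑ t, ‖X t j‖ ^ 2 ≤ a ^ 2) (hY : ∀ k, ∑ t, ‖Y k t‖ ^ 2 ≤ b ^ 2)
include hc ha hb hC hX hY

theorem re_trace_le (hM : InfOneNormLE M C) : re (trace (X * M * Y)) ≤ 2 * c * a * b * C := by
  set Xr := fromRows (X.map re) (X.map im)
  set Yr := fromCols (Y.map re) (-Y.map im)
  set Yi := fromCols (Y.map im) (Y.map re)
  have hre : re (trace (X * M * Y)) = trace (Xr * M.map re * Yr) - trace (Xr * M.map im * Yi) := by
    rw [trace_mul_cycle, trace_mul_comm, re_trace_mul, map_re_mul, map_im_mul, trace_mul_cycle',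
      trace_mul_cycle' (M.map im), Matrix.mul_assoc, Matrix.mul_assoc]
  have hXr : ∀ j, ∑ s, Xr s j ^ 2 ≤ a ^ 2 := fun j => by
    simpa [Xr, Fintype.sum_sum_type, ← Finset.sum_add_distrib, sq_re_add_sq_im] using hX j
  have hYr : ∀ k, ∑ s, Yr k s ^ 2 ≤ b ^ 2 := fun k => by
    simpa [Yr, Fintype.sum_sum_type, ← Finset.sum_add_distrib, sq_re_add_sq_im] using hY k
  have hYi : ∀ k, ∑ s, Yi k s ^ 2 ≤ b ^ 2 := fun k => by
    simpa [Yi, Fintype.sum_sum_type, ← Finset.sum_add_distrib, add_comm (im _ ^ 2),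
      sq_re_add_sq_im] using hY k
  have h₁ := hc.abs_trace_le ha hb hC hXr hYr hM.map_re
  have h₂ := hc.abs_trace_le ha hb hC hXr hYi hM.map_im
  rw [hre]
  linarith [le_abs_self (trace (Xr * M.map re * Yr)), neg_abs_le (trace (Xr * M.map im * Yi))]

theorem norm_trace_le (hM : InfOneNormLE M C) : ‖trace (X * M * Y)‖ ≤ 2 * c * a * b * C := by
  obtain ⟨w, hw, hwz⟩ := exists_norm_le_one_re_mul_eq_norm (trace (X * M * Y))
  have hrot : w * trace (X * M * Y) = trace (X * (w • M) * Y) := by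
    simp [Matrix.mul_smul, Matrix.smul_mul, trace_smul]
  rw [← hwz, hrot]
  exact hc.re_trace_le ha hb hC hX hY ((hM.smul w).mono (mul_le_of_le_one_left hC.le hw))

end IsGrothendieckConstant

end Realification

section OpNorm

open WithLp

variable {𝕜 : Type*} [RCLike 𝕜] {l m n : ℕ}

section

variable {p q : ℝ≥0∞} [Fact (1 ≤ p)] [Fact (1 ≤ q)]

omit [Fact (1 ≤ q)] in
theorem lpNorm_eq_norm (x : Fin n → 𝕜) : lpNorm p x = ‖toLp p x‖ := by
  rcases eq_or_ne p ∞ with rfl | hp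
  · simp [lpNorm, PiLp.norm_eq_ciSup]
  · rw [PiLp.norm_eq_sum (ENNReal.toReal_pos (zero_lt_one.trans_le Fact.out).ne' hp)]
    simp [lpNorm, hp]

omit [Fact (1 ≤ q)] in
theorem lpNorm_pos {x : Fin n → 𝕜} (hx : x ≠ 0) : 0 < lpNorm p x := by
  simpa [lpNorm_eq_norm] using hx

theorem opNorm_nonneg (A : Matrix (Fin m) (Fin n) 𝕜) : 0 ≤ opNorm p q A :=
  Real.iSup_nonneg fun _ => div_nonneg (by rw [lpNorm_eq_norm]; positivity)
    (by rw [lpNorm_eq_norm]; positivity)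

theorem lpNorm_mulVec_le (A : Matrix (Fin m) (Fin n) 𝕜) (z : Fin n → 𝕜) :
    lpNorm q (A *ᵥ z) ≤ opNorm p q A * lpNorm p z := by
  rcases eq_or_ne z 0 with rfl | hz
  · simp [lpNorm_eq_norm]
  let L := LinearMap.toContinuousLinearMap (toLpLin p q A)
  rw [← div_le_iff₀ (lpNorm_pos hz)]
  refine le_ciSup (f := fun z : {z : Fin n → 𝕜 // z ≠ 0} => lpNorm q (A *ᵥ z.1) / lpNorm p z.1)
    ⟨‖L‖, ?_⟩ ⟨z, hz⟩
  rintro _ ⟨w, rfl⟩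
  rw [div_le_iff₀ (lpNorm_pos w.2), lpNorm_eq_norm, lpNorm_eq_norm]
  exact L.le_opNorm (toLp p w.1)

theorem opNorm_pos {A : Matrix (Fin m) (Fin n) 𝕜} (hA : A ≠ 0) : 0 < opNorm p q A := by
  classical
  obtain ⟨k, hk⟩ : ∃ k, A *ᵥ Pi.single k 1 ≠ 0 := by
    by_contra! h
    exact hA (Matrix.ext fun i k => by simpa using congrFun (h k) i)
  have h := lpNorm_mulVec_le (p := p) (q := q) A (Pi.single k 1)
  rw [lpNorm_eq_norm (p := p), PiLp.toLp_single, PiLp.norm_single, norm_one, mul_one] at h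
  exact (lpNorm_pos hk).trans_le h

end

theorem sum_sq_norm_col_le_opNorm (X : Matrix (Fin l) (Fin m) 𝕜) (j : Fin m) :
    ∑ t, ‖X t j‖ ^ 2 ≤ opNorm 1 2 X ^ 2 := by
  classical
  have h := lpNorm_mulVec_le (p := 1) (q := 2) X (Pi.single j 1)
  rw [lpNorm_eq_norm, lpNorm_eq_norm, PiLp.toLp_single, PiLp.norm_single, norm_one, mul_one,
    Matrix.mulVec_single_one] at h
  calc ∑ t, ‖X t j‖ ^ 2 = ‖toLp 2 (X.col j)‖ ^ 2 := by simp [PiLp.norm_sq_eq_of_L2]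
    _ ≤ opNorm 1 2 X ^ 2 := pow_le_pow_left₀ (norm_nonneg _) h 2

theorem sum_sq_norm_row_le_opNorm (Y : Matrix (Fin n) (Fin l) 𝕜) (k : Fin n) :
    ∑ t, ‖Y k t‖ ^ 2 ≤ opNorm 2 ∞ Y ^ 2 := by
  set r := ‖toLp 2 (star (Y k))‖
  have hr : r ^ 2 = ∑ t, ‖Y k t‖ ^ 2 := by simp [r, PiLp.norm_sq_eq_of_L2]
  have hYk : (Y *ᵥ star (Y k)) k = ((r ^ 2 : ℝ) : 𝕜) := by
    simp [hr, Matrix.mulVec, dotProduct, RCLike.mul_conj]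
  have h := lpNorm_mulVec_le (p := 2) (q := ∞) Y (star (Y k))
  rw [lpNorm_eq_norm, lpNorm_eq_norm] at h
  have hle : r ^ 2 ≤ opNorm 2 ∞ Y * r :=
    calc r ^ 2 = ‖(Y *ᵥ star (Y k)) k‖ := by rw [hYk, RCLike.norm_ofReal, abs_sq]
      _ ≤ _ := (PiLp.norm_apply_le (toLp ∞ (Y *ᵥ star (Y k))) k).trans h
  rw [← hr]
  nlinarith [norm_nonneg (toLp 2 (star (Y k)))]

theorem infOneNormLE_opNorm (M : Matrix (Fin m) (Fin n) 𝕜) : InfOneNormLE M (opNorm ∞ 1 M) := by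
  intro u v hu hv
  have hv1 : lpNorm ∞ v ≤ 1 := by
    rw [lpNorm_eq_norm, PiLp.norm_eq_ciSup]
    exact Real.iSup_le hv zero_le_one
  calc ‖u ⬝ᵥ M *ᵥ v‖ ≤ ∑ j, ‖u j‖ * ‖(M *ᵥ v) j‖ := by
        simpa only [dotProduct, norm_mul] using
          norm_sum_le Finset.univ fun j => u j * (M *ᵥ v) j
    _ ≤ ∑ j, ‖(M *ᵥ v) j‖ := by
        gcongr with j
        exact mul_le_of_le_one_left (norm_nonneg _) (hu j)
    _ = lpNorm 1 (M *ᵥ v) := by rw [lpNorm_eq_norm, PiLp.norm_eq_of_L1]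
    _ ≤ opNorm ∞ 1 M * lpNorm ∞ v := lpNorm_mulVec_le M v
    _ ≤ opNorm ∞ 1 M := mul_le_of_le_one_right (opNorm_nonneg M) hv1

end OpNorm

/-- Grothendieck's inequality in norm form: there is a finite constant `K` such that
`|tr(XMY)| ≤ K ‖X‖_{1,2} ‖Y‖_{2,∞} ‖M‖_{∞,1}` for all dimensions and all nonzero matrices. -/
theorem stmt10 (𝕜 : Type*) [RCLike 𝕜] :
    ∃ K : ℝ, ∀ (l m n : ℕ) (X : Matrix (Fin l) (Fin m) 𝕜) (M : Matrix (Fin m) (Fin n) 𝕜)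
        (Y : Matrix (Fin n) (Fin l) 𝕜), X ≠ 0 → M ≠ 0 → Y ≠ 0 →
      ‖(X * M * Y).trace‖ ≤ K * (opNorm 1 2 X * opNorm 2 ∞ Y * opNorm ∞ 1 M) := by
  refine ⟨2 * 96, fun l m n X M Y hX hM hY => ?_⟩
  calc ‖(X * M * Y).trace‖ ≤ 2 * 96 * opNorm 1 2 X * opNorm 2 ∞ Y * opNorm ∞ 1 M :=
        (isGrothendieckConstant_ninetySix (Fin m) (Fin n)).norm_trace_le (opNorm_pos hX)
          (opNorm_pos hY) (opNorm_pos hM) (sum_sq_norm_col_le_opNorm X)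
          (sum_sq_norm_row_le_opNorm Y) (infOneNormLE_opNorm M)
    _ = 2 * 96 * (opNorm 1 2 X * opNorm 2 ∞ Y * opNorm ∞ 1 M) := by ring
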